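/- Let X be a formal vector field on C^2 of order ≥ 2 and f ∈ C[[x,y]]. If X = f X' for some formal vector field X' = a' ∂/∂x + b' ∂/∂y, then Exp(X) = (x + f·P, y + f·Q) for some formal power series P, Q. In particular the ideal generated by the two components of Exp(X) − id equals the ideal generated by f times the components of X when f and X' share no common factor; consequently, the components p, q of Exp(X) − id and the components a, b of X generate the same ideal of C[[x,y]]. -/

import Mathlib

open Finsupp

noncomputable section

abbrev F2 : Type := MvPowerSeries (Fin 2) ℂ

/-- total degree of a monomial exponent -/
def deg (d : Fin 2 →₀ ℕ) : ℕ := d 0 + d 1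

/-- the exponent (m, n) -/
def idx (m n : ℕ) : Fin 2 →₀ ℕ := Finsupp.single 0 m + Finsupp.single 1 n

/-- partial derivative of a formal power series -/
def pd (i : Fin 2) (f : F2) : F2 :=
  fun d => ((d i : ℂ) + 1) * MvPowerSeries.coeff (d + Finsupp.single i 1) f

/-- the derivation a ∂/∂x + b ∂/∂y applied to g -/
def vf (a b g : F2) : F2 := a * pd 0 g + b * pd 1 g

/-- `ordGE f k` : the order ν(f) is at least k -/
def ordGE (f : F2) (k : ℕ) : Prop :=
  ∀ d : Fin 2 →₀ ℕ, deg d < k → MvPowerSeries.coeff d f = 0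

/-- exp X (g) = Σ_j (1/j!) X^j(g), coefficientwise -/
def expX (a b g : F2) : F2 :=
  fun d => ∑' j : ℕ, ((j.factorial : ℂ))⁻¹ * MvPowerSeries.coeff d ((vf a b)^[j] g)

/-- degree-k homogeneous part -/
def HT (k : ℕ) (f : F2) : F2 :=
  fun d => if deg d = k then MvPowerSeries.coeff d f else 0

/-- substitution y := x·v :  f(x, xv), in coordinates (x, v) -/
def blowup (f : F2) : F2 :=
  fun d => if d 1 ≤ d 0 then MvPowerSeries.coeff (idx (d 0 - d 1) (d 1)) f else 0

/-- `dehom k f` = f_k(1, v), where f_k is the degree-k homogeneous part of f -/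
def dehom (k : ℕ) (f : F2) : F2 :=
  fun d => if d 0 = 0 ∧ d 1 ≤ k then MvPowerSeries.coeff (idx (k - d 1) (d 1)) f else 0

/-- evaluation of the degree-k homogeneous part of f at (1, v0) -/
def evk (k : ℕ) (v0 : ℂ) (f : F2) : ℂ :=
  ∑ n ∈ Finset.range (k+1), MvPowerSeries.coeff (idx (k-n) n) f * v0 ^ n

/-- the linear change of coordinates f(x, y) ↦ f(x, y + v0·x) -/
def shear (v0 : ℂ) (f : F2) : F2 :=
  fun d => ∑ j ∈ Finset.range (deg d + 1),
    if d 1 ≤ j ∧ j - d 1 ≤ d 0 then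
      (j.choose (d 1) : ℂ) * v0 ^ (j - d 1) *
        MvPowerSeries.coeff (idx (d 0 - (j - d 1)) j) f
    else 0

/-- the coordinate x -/
def Xv : F2 := MvPowerSeries.X 0
/-- the coordinate y (alias v in the blow-up chart) -/
def Yv : F2 := MvPowerSeries.X 1

end

/-! Every term `Xʲ⁺¹ g = a ∂ₓ(Xʲ g) + b ∂ᵧ(Xʲ g)` of `exp X (g) - g` lies in the ideal `(a, b)`,
so `exp X (g) = g + a Pₓ(g) + b Pᵧ(g)` with `Pᵢ(g) = ∑ⱼ ∂ᵢ(Xʲ g) / (j + 1)!`; these series converge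
because `ν(Xʲ g) ≥ j + 1`. With `a = f a'`, `b = f b'` this is the factorisation. For `g = x, y`
the matrix `(Pᵢ(g))` has constant term the identity, hence is invertible, so the components of
`Exp(X) - id` generate the same ideal as `a, b`. -/

open MvPowerSeries Nat

lemma deg_add (d e : Fin 2 →₀ ℕ) : deg (d + e) = deg d + deg e := by
  simp only [deg, Finsupp.add_apply]
  ring

lemma deg_single_one (i : Fin 2) : deg (single i 1) = 1 := by
  fin_cases i <;> simp [deg]

section Order

variable {f g : F2} {k m : ℕ}

lemma ordGE_mono (hf : ordGE f k) (hmk : m ≤ k) : ordGE f m :=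
  fun d hd => hf d (by omega)

lemma ordGE_smul (c : ℂ) (hf : ordGE f k) : ordGE (c • f) k := fun d hd => by
  rw [coeff_smul, hf d hd, mul_zero]

lemma ordGE_mul (hf : ordGE f k) (hg : ordGE g m) : ordGE (f * g) (k + m) := by
  intro d hd
  rw [coeff_mul]
  refine Finset.sum_eq_zero fun p hp => ?_
  have hdeg : deg p.1 + deg p.2 = deg d := by
    rw [← deg_add, Finset.HasAntidiagonal.mem_antidiagonal.mp hp]
  rcases lt_or_ge (deg p.1) k with h | h
  · rw [hf p.1 h, zero_mul]
  · rw [hg p.2 (by omega), mul_zero]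

lemma ordGE_pd (i : Fin 2) (hg : ordGE g (k + 1)) : ordGE (pd i g) k := fun d hd => by
  change ((d i : ℂ) + 1) * coeff (d + single i 1) g = 0
  rw [hg _ (by rw [deg_add, deg_single_one]; omega), mul_zero]

lemma ordGE_X (i : Fin 2) : ordGE (X i) 1 := by
  intro d hd
  have : d ≠ single i 1 := by
    rintro rfl
    rw [deg_single_one] at hd
    omega
  simp [coeff_X, this]

variable {a b : F2}

lemma ordGE_vf (ha : ordGE a 2) (hb : ordGE b 2) (hg : ordGE g (k + 1)) :
    ordGE (vf a b g) (k + 2) := fun d hd => by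
  rw [vf, map_add, ordGE_mul ha (ordGE_pd 0 hg) d (by omega),
    ordGE_mul hb (ordGE_pd 1 hg) d (by omega), add_zero]

lemma ordGE_vf_iterate (ha : ordGE a 2) (hb : ordGE b 2) (hg : ordGE g 1) (j : ℕ) :
    ordGE ((vf a b)^[j] g) (j + 1) := by
  induction j with
  | zero => simpa using hg
  | succ j ih =>
    rw [Function.iterate_succ_apply']
    exact ordGE_vf ha hb ih

end Order

/-- The coefficientwise sum `∑ⱼ F j`, meaningful when `ν(F j) ≥ j`: then only finitely many
`F j` contribute to each coefficient. -/
noncomputable def tsumCoeff (F : ℕ → F2) : F2 := fun d => ∑' j, coeff d (F j)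

section TsumCoeff

variable {F G : ℕ → F2}

lemma coeff_tsumCoeff (F : ℕ → F2) (d : Fin 2 →₀ ℕ) :
    coeff d (tsumCoeff F) = ∑' j, coeff d (F j) := rfl

lemma summable_coeff (hF : ∀ j, ordGE (F j) j) (d : Fin 2 →₀ ℕ) :
    Summable fun j => coeff d (F j) :=
  summable_of_ne_finset_zero (s := Finset.range (deg d + 1)) fun j hj =>
    hF j d (by simpa using hj)

lemma tsumCoeff_add (hF : ∀ j, ordGE (F j) j) (hG : ∀ j, ordGE (G j) j) :
    tsumCoeff (fun j => F j + G j) = tsumCoeff F + tsumCoeff G := by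
  ext d
  simp only [coeff_tsumCoeff, map_add]
  exact (summable_coeff hF d).tsum_add (summable_coeff hG d)

lemma mul_tsumCoeff (a : F2) (hF : ∀ j, ordGE (F j) j) :
    a * tsumCoeff F = tsumCoeff fun j => a * F j := by
  ext d
  simp only [coeff_tsumCoeff, coeff_mul]
  rw [Summable.tsum_finsetSum fun (p : (Fin 2 →₀ ℕ) × (Fin 2 →₀ ℕ)) _ =>
    (summable_coeff hF p.2).mul_left (coeff p.1 a)]
  exact Finset.sum_congr rfl fun p _ => ((summable_coeff hF p.2).tsum_mul_left (coeff p.1 a)).symm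

lemma tsumCoeff_eq_zero_add (hF : ∀ j, ordGE (F j) j) :
    tsumCoeff F = F 0 + tsumCoeff fun j => F (j + 1) := by
  ext d
  simp only [coeff_tsumCoeff, map_add]
  exact (summable_coeff hF d).tsum_eq_zero_add

lemma constantCoeff_tsumCoeff (hF : ∀ j, ordGE (F j) j) :
    constantCoeff (tsumCoeff F) = constantCoeff (F 0) := by
  rw [← coeff_zero_eq_constantCoeff_apply, ← coeff_zero_eq_constantCoeff_apply, coeff_tsumCoeff]
  exact tsum_eq_single 0 fun j hj => hF j 0 (by simp [deg]; omega)

end TsumCoeff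

lemma expX_eq_tsumCoeff (a b g : F2) :
    expX a b g = tsumCoeff fun j => (j ! : ℂ)⁻¹ • (vf a b)^[j] g := by
  ext d
  simp only [coeff_tsumCoeff, coeff_smul]
  rfl

noncomputable def expTail (a b : F2) (i : Fin 2) (g : F2) : F2 :=
  tsumCoeff fun j => ((j + 1)! : ℂ)⁻¹ • pd i ((vf a b)^[j] g)

section ExpTail

variable {a b g : F2}

lemma ordGE_expTail_term (ha : ordGE a 2) (hb : ordGE b 2) (hg : ordGE g 1) (i : Fin 2)
    (j : ℕ) : ordGE (((j + 1)! : ℂ)⁻¹ • pd i ((vf a b)^[j] g)) j :=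
  ordGE_smul _ (ordGE_pd i (ordGE_vf_iterate ha hb hg j))

theorem expX_eq_add_expTail (ha : ordGE a 2) (hb : ordGE b 2) (hg : ordGE g 1) :
    expX a b g = g + (a * expTail a b 0 g + b * expTail a b 1 g) := by
  have hterm (j : ℕ) : ordGE ((j ! : ℂ)⁻¹ • (vf a b)^[j] g) j :=
    ordGE_mono (ordGE_smul _ (ordGE_vf_iterate ha hb hg j)) j.le_succ
  have hstep : (fun j => ((j + 1)! : ℂ)⁻¹ • (vf a b)^[j + 1] g) = fun j =>
      a * (((j + 1)! : ℂ)⁻¹ • pd 0 ((vf a b)^[j] g)) +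
        b * (((j + 1)! : ℂ)⁻¹ • pd 1 ((vf a b)^[j] g)) := by
    funext j
    rw [Function.iterate_succ_apply', vf, smul_add, mul_smul_comm, mul_smul_comm]
  rw [expX_eq_tsumCoeff, tsumCoeff_eq_zero_add hterm, hstep, tsumCoeff_add, expTail, expTail,
    mul_tsumCoeff a (ordGE_expTail_term ha hb hg 0),
    mul_tsumCoeff b (ordGE_expTail_term ha hb hg 1)]
  · simp
  · exact fun j => ordGE_mono (ordGE_mul ha (ordGE_expTail_term ha hb hg 0 j)) (by omega)
  · exact fun j => ordGE_mono (ordGE_mul hb (ordGE_expTail_term ha hb hg 1 j)) (by omega)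

lemma constantCoeff_expTail (ha : ordGE a 2) (hb : ordGE b 2) (hg : ordGE g 1) (i : Fin 2) :
    constantCoeff (expTail a b i g) = coeff (single i 1) g := by
  rw [expTail, constantCoeff_tsumCoeff (ordGE_expTail_term ha hb hg i),
    ← coeff_zero_eq_constantCoeff_apply, coeff_smul]
  change _ * (((0 : Fin 2 →₀ ℕ) i + 1) * coeff (0 + single i 1) g) = _
  simp

end ExpTail

theorem Ideal.span_pair_eq_of_isUnit_det {R : Type*} [CommRing R] {a b p q P₁ Q₁ P₂ Q₂ : R}
    (hp : P₁ * a + Q₁ * b = p) (hq : P₂ * a + Q₂ * b = q) (hdet : IsUnit (P₁ * Q₂ - Q₁ * P₂)) :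
    Ideal.span {p, q} = Ideal.span {a, b} := by
  obtain ⟨u, hu⟩ := hdet.exists_left_inv
  apply le_antisymm <;> rw [Ideal.span_le, Set.insert_subset_iff, Set.singleton_subset_iff]
  · exact ⟨Ideal.mem_span_pair.mpr ⟨P₁, Q₁, hp⟩, Ideal.mem_span_pair.mpr ⟨P₂, Q₂, hq⟩⟩
  · refine ⟨Ideal.mem_span_pair.mpr ⟨u * Q₂, -(u * Q₁), ?_⟩,
      Ideal.mem_span_pair.mpr ⟨-(u * P₂), u * P₁, ?_⟩⟩
    · linear_combination (Q₁ * u) * hq - (Q₂ * u) * hp + a * hu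
    · linear_combination (P₂ * u) * hp - (P₁ * u) * hq + b * hu

/-- if X = f·X' then Exp(X) = (x + f·P, y + f·Q); moreover the components of
Exp(X) - id and the components of X generate the same ideal of ℂ[[x,y]]. -/
theorem Exp_factor (f a' b' : F2) (ha : ordGE (f * a') 2) (hb : ordGE (f * b') 2) :
    (∃ P Q : F2,
        expX (f * a') (f * b') Xv = Xv + f * P ∧
        expX (f * a') (f * b') Yv = Yv + f * Q) ∧
    Ideal.span {expX (f * a') (f * b') Xv - Xv, expX (f * a') (f * b') Yv - Yv}
      = Ideal.span {f * a', f * b'} := by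
  have hX := expX_eq_add_expTail (g := Xv) ha hb (ordGE_X 0)
  have hY := expX_eq_add_expTail (g := Yv) ha hb (ordGE_X 1)
  set E := expTail (f * a') (f * b')
  refine ⟨⟨a' * E 0 Xv + b' * E 1 Xv, a' * E 0 Yv + b' * E 1 Yv,
      by rw [hX]; ring, by rw [hY]; ring⟩,
    Ideal.span_pair_eq_of_isUnit_det (P₁ := E 0 Xv) (Q₁ := E 1 Xv) (P₂ := E 0 Yv) (Q₂ := E 1 Yv)
      (by rw [hX]; ring) (by rw [hY]; ring) ?_⟩
  rw [isUnit_iff_constantCoeff, map_sub, map_mul, map_mul]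
  simp [E, constantCoeff_expTail ha hb (ordGE_X _), Xv, Yv, coeff_X, single_eq_single_iff]
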